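/- Let $n \ge 1$, $1 \le p < q < \infty$ and $\varepsilon \in (0,1)$. Define $f(x) = \chi_{(0,1)}(|x|) |x|^{-n/q}$, $g(x) = \chi_{(0,\varepsilon)}(|x|) f(x)$, $h(x) = f(x) - g(x)$, and $k(x) = g(x) - h(x)$ for $x \in \mathbb{R}^n \setminus \{0\}$. Then $\|f\|_{m^p_q} = \|g\|_{m^p_q} = \|k\|_{m^p_q}$. -/

import Mathlib

open MeasureTheory Metric Set Pointwise

/-- The set of candidate values whose supremum defines the small Morrey norm of `f`
on `ℝⁿ`: `|B(a,r)|^(1/q-1/p) (∫_{B(a,r)} |f|^p)^(1/p)` over all centers `a` and radii `r ∈ (0,1)`. -/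
def smallMorreySet (n : ℕ) (p q : ℝ) (f : EuclideanSpace ℝ (Fin n) → ℝ) : Set ℝ :=
  {v : ℝ | ∃ (a : EuclideanSpace ℝ (Fin n)) (r : ℝ), 0 < r ∧ r < 1 ∧
    v = (volume (Metric.ball a r)).toReal ^ (1 / q - 1 / p) *
        (∫ x in Metric.ball a r, |f x| ^ p) ^ (1 / p)}

/-- The small Morrey norm `‖f‖_{m^p_q}`. -/
noncomputable def smallMorreyNorm (n : ℕ) (p q : ℝ) (f : EuclideanSpace ℝ (Fin n) → ℝ) : ℝ :=
  sSup (smallMorreySet n p q f)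

/-- `f` belongs to the small Morrey space `m^p_q(ℝⁿ)`: it is measurable and its small Morrey
norm is finite (i.e. the defining supremum is over a bounded set). -/
def MemSmallMorrey (n : ℕ) (p q : ℝ) (f : EuclideanSpace ℝ (Fin n) → ℝ) : Prop :=
  Measurable f ∧ BddAbove (smallMorreySet n p q f)

lemma integrable_rpow_indicator (n : ℕ) (hn : 1 ≤ n) (s : ℝ) (hs0 : 0 < s) (hsn : s < n) :
    Integrable (fun x : EuclideanSpace ℝ (Fin n) =>
      if 0 < ‖x‖ ∧ ‖x‖ < 1 then ‖x‖ ^ (-s) else 0) := by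
  classical
  haveI : Nonempty (Fin n) := Fin.pos_iff_nonempty.mp hn
  set E := EuclideanSpace ℝ (Fin n)
  set φ : E → ℝ := fun x => if 0 < ‖x‖ ∧ ‖x‖ < 1 then ‖x‖ ^ (-s) else 0 with hφ
  have hS : MeasurableSet {x : E | 0 < ‖x‖ ∧ ‖x‖ < 1} :=
    (measurableSet_lt measurable_const measurable_norm).inter
      (measurableSet_lt measurable_norm measurable_const)
  have hmeas : Measurable φ :=
    Measurable.ite hS (measurable_norm.pow_const _) measurable_const
  refine ⟨hmeas.aestronglyMeasurable, ?_⟩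
  rw [hasFiniteIntegral_iff_norm]
  have hpt : ∀ x : E, ENNReal.ofReal ‖φ x‖ =
      ({x : E | 0 < ‖x‖ ∧ ‖x‖ < 1}).indicator
        (fun x => ENNReal.ofReal (‖x‖ ^ (-s))) x := by
    intro x
    by_cases hx : 0 < ‖x‖ ∧ ‖x‖ < 1
    · rw [Set.indicator_of_mem (show x ∈ {x : E | 0 < ‖x‖ ∧ ‖x‖ < 1} from hx)]
      simp only [hφ, if_pos hx]
      rw [Real.norm_of_nonneg (Real.rpow_nonneg (norm_nonneg x) _)]
    · rw [Set.indicator_of_notMem (show x ∉ {x : E | 0 < ‖x‖ ∧ ‖x‖ < 1} from hx)]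
      simp only [hφ, if_neg hx, norm_zero, ENNReal.ofReal_zero]
  simp only [hpt]
  rw [lintegral_indicator hS]
  set A : ℕ → Set E := fun j => ball 0 ((1/2 : ℝ) ^ j) \ ball 0 ((1/2 : ℝ) ^ (j+1)) with hA
  have hsub : {x : E | 0 < ‖x‖ ∧ ‖x‖ < 1} ⊆ ⋃ j, A j := by
    rintro x ⟨hx0, hx1⟩
    have hex : ∃ j : ℕ, (1/2 : ℝ) ^ (j+1) ≤ ‖x‖ := by
      obtain ⟨j, hj⟩ := exists_pow_lt_of_lt_one hx0 (by norm_num : (1/2 : ℝ) < 1)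
      exact ⟨j, le_trans (pow_le_pow_of_le_one (by norm_num) (by norm_num) (Nat.le_succ j)) hj.le⟩
    have hj1 := Nat.find_spec hex
    have hj2 : ‖x‖ < (1/2 : ℝ) ^ (Nat.find hex) := by
      rcases Nat.eq_zero_or_pos (Nat.find hex) with h0 | hpos
      · rw [h0]; simpa using hx1
      · obtain ⟨m, hm⟩ := Nat.exists_eq_succ_of_ne_zero hpos.ne'
        have := Nat.find_min hex (m := m) (by omega)
        rw [hm]; exact lt_of_not_ge this
    refine mem_iUnion.mpr ⟨Nat.find hex, ?_⟩
    constructor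
    · simpa [mem_ball, dist_eq_norm] using hj2
    · simp only [mem_ball, dist_eq_norm, sub_zero, not_lt]
      simpa using hj1
  have hbound : ∀ j : ℕ, (∫⁻ x in A j, ENNReal.ofReal (‖x‖ ^ (-s))) ≤
      ENNReal.ofReal (((1/2 : ℝ) ^ (j+1)) ^ (-s) * ((1/2 : ℝ) ^ (j : ℕ)) ^ n) *
        volume (ball (0 : E) 1) := by
    intro j
    have h1 : ∀ x ∈ A j, ENNReal.ofReal (‖x‖ ^ (-s)) ≤
        ENNReal.ofReal (((1/2 : ℝ) ^ (j+1)) ^ (-s)) := by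
      rintro x ⟨-, hx2⟩
      apply ENNReal.ofReal_le_ofReal
      refine Real.rpow_le_rpow_of_nonpos (by positivity) ?_ (by linarith)
      simp only [mem_ball, dist_zero_right, dist_eq_norm, sub_zero, not_lt] at hx2
      exact hx2
    calc (∫⁻ x in A j, ENNReal.ofReal (‖x‖ ^ (-s)))
        ≤ ∫⁻ _ in A j, ENNReal.ofReal (((1/2 : ℝ) ^ (j+1)) ^ (-s)) :=
          setLIntegral_mono' (measurableSet_ball.diff measurableSet_ball) h1
      _ = ENNReal.ofReal (((1/2 : ℝ) ^ (j+1)) ^ (-s)) * volume (A j) := by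
          rw [setLIntegral_const]
      _ ≤ ENNReal.ofReal (((1/2 : ℝ) ^ (j+1)) ^ (-s)) * volume (ball (0 : E) ((1/2:ℝ) ^ j)) := by
          gcongr
          exact diff_subset
      _ = _ := by
          rw [Measure.addHaar_ball_of_pos _ _ (by positivity), finrank_euclideanSpace_fin,
            ← mul_assoc, ← ENNReal.ofReal_mul (by positivity)]

  have h2 : (1:ℝ) < 2 := one_lt_two
  set r : ℝ := (2:ℝ) ^ (s - (n:ℝ)) with hr
  have hr0 : 0 ≤ r := Real.rpow_nonneg (by norm_num) _
  have hr1 : r < 1 := Real.rpow_lt_one_of_one_lt_of_neg h2 (by linarith)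
  have hc : ∀ j : ℕ, ((1/2:ℝ) ^ (j+1)) ^ (-s) * ((1/2:ℝ) ^ j) ^ n
      = (2:ℝ) ^ s * r ^ j := by
    intro j
    have e1 : ∀ m : ℕ, ((1/2:ℝ) ^ m) = (2:ℝ) ^ (-(m:ℝ)) := by
      intro m
      rw [Real.rpow_neg (by norm_num : (0:ℝ) ≤ 2), Real.rpow_natCast, one_div, inv_pow]
    rw [e1 (j+1), e1 j, ← Real.rpow_natCast ((2:ℝ) ^ (-((j:ℝ)))) n,
      ← Real.rpow_mul (by norm_num), ← Real.rpow_mul (by norm_num),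
      hr, ← Real.rpow_natCast ((2:ℝ) ^ (s - (n:ℝ))) j, ← Real.rpow_mul (by norm_num),
      ← Real.rpow_add (by norm_num), ← Real.rpow_add (by norm_num)]
    congr 1
    push_cast
    ring
  calc (∫⁻ x in {x : E | 0 < ‖x‖ ∧ ‖x‖ < 1}, ENNReal.ofReal (‖x‖ ^ (-s)))
      ≤ ∫⁻ x in ⋃ j, A j, ENNReal.ofReal (‖x‖ ^ (-s)) := lintegral_mono_set hsub
    _ ≤ ∑' j, ∫⁻ x in A j, ENNReal.ofReal (‖x‖ ^ (-s)) := lintegral_iUnion_le _ _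
    _ ≤ ∑' j, ENNReal.ofReal (((1/2:ℝ) ^ (j+1)) ^ (-s) * ((1/2:ℝ) ^ j) ^ n)
          * volume (ball (0:E) 1) := ENNReal.tsum_le_tsum hbound
    _ = (ENNReal.ofReal ((2:ℝ) ^ s) * (1 - ENNReal.ofReal r)⁻¹) * volume (ball (0:E) 1) := by
        rw [ENNReal.tsum_mul_right]
        congr 1
        calc ∑' j, ENNReal.ofReal (((1/2:ℝ) ^ (j+1)) ^ (-s) * ((1/2:ℝ) ^ j) ^ n)
            = ∑' j : ℕ, ENNReal.ofReal ((2:ℝ) ^ s) * ENNReal.ofReal r ^ j := by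
              congr 1; funext j
              rw [hc j, ENNReal.ofReal_mul (by positivity), ENNReal.ofReal_pow hr0]
          _ = _ := by rw [ENNReal.tsum_mul_left, ENNReal.tsum_geometric]
    _ < ⊤ := by
        apply ENNReal.mul_lt_top _ measure_ball_lt_top
        apply ENNReal.mul_lt_top ENNReal.ofReal_lt_top
        rw [ENNReal.inv_lt_top]
        simp [tsub_pos_iff_lt, ENNReal.ofReal_lt_one, hr1]

/-- For `f(x) = χ_{(0,1)}(|x|) |x|^{-n/q}`, `g = χ_{(0,ε)}(|x|) f`, `h = f - g` and
`k = g - h`, the small Morrey norms of `f`, `g` and `k` coincide. -/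
theorem smallMorreyNorm_fgk_eq (n : ℕ) (hn : 1 ≤ n)
    (p q ε : ℝ) (hp : 1 ≤ p) (hpq : p < q) (hε : 0 < ε) (hε1 : ε < 1)
    (f g h k : EuclideanSpace ℝ (Fin n) → ℝ)
    (hf : ∀ x : EuclideanSpace ℝ (Fin n), x ≠ 0 →
      f x = if 0 < ‖x‖ ∧ ‖x‖ < 1 then ‖x‖ ^ (-((n : ℝ) / q)) else 0)
    (hg : ∀ x : EuclideanSpace ℝ (Fin n), x ≠ 0 →
      g x = if 0 < ‖x‖ ∧ ‖x‖ < ε then f x else 0)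
    (hh : h = f - g) (hk : k = g - h) :
    smallMorreyNorm n p q f = smallMorreyNorm n p q g ∧
    smallMorreyNorm n p q g = smallMorreyNorm n p q k := by
  classical
  haveI : Nonempty (Fin n) := Fin.pos_iff_nonempty.mp hn
  haveI : Nontrivial (EuclideanSpace ℝ (Fin n)) := inferInstance
  have hp0 : (0:ℝ) < p := lt_of_lt_of_le one_pos hp
  have hq0 : (0:ℝ) < q := lt_trans hp0 hpq
  have hn0 : (0:ℝ) < (n:ℝ) := by exact_mod_cast hn
  set s : ℝ := ((n:ℝ) / q) * p with hs
  have hs0 : 0 < s := by positivity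
  have hsn : s < (n:ℝ) := by
    have : (n:ℝ) / q * p = (n:ℝ) * (p / q) := by ring
    rw [hs, this]
    calc (n:ℝ) * (p / q) < (n:ℝ) * 1 :=
          mul_lt_mul_of_pos_left ((div_lt_one hq0).mpr hpq) hn0
      _ = (n:ℝ) := mul_one _
  set φ : EuclideanSpace ℝ (Fin n) → ℝ := fun x => if 0 < ‖x‖ ∧ ‖x‖ < 1 then ‖x‖ ^ (-s) else 0 with hφ
  have hInt : Integrable φ := integrable_rpow_indicator n hn s hs0 hsn
  have hae0 : ∀ᵐ x : EuclideanSpace ℝ (Fin n) ∂volume, x ≠ 0 := by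
    refine (ae_iff).mpr ?_
    simp only [ne_eq, not_not, Set.setOf_eq_eq_singleton]
    exact measure_singleton _
  have hfp : ∀ x : EuclideanSpace ℝ (Fin n), x ≠ 0 → |f x| ^ p = φ x := by
    intro x hx
    rw [hf x hx, hφ]
    by_cases hc : 0 < ‖x‖ ∧ ‖x‖ < 1
    · simp only [if_pos hc]
      rw [abs_of_nonneg (Real.rpow_nonneg (norm_nonneg x) _), ← Real.rpow_mul (norm_nonneg x)]
      congr 1
      rw [hs]; ring
    · simp only [if_neg hc, abs_zero, Real.zero_rpow hp0.ne']
  have hIf : ∀ (a : EuclideanSpace ℝ (Fin n)) (r : ℝ), IntegrableOn (fun x => |f x| ^ p) (Metric.ball a r) :=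
    fun a r => (hInt.integrableOn).congr
      (ae_restrict_of_ae (hae0.mono fun x hx => (hfp x hx).symm))
  have hInn : ∀ (F : EuclideanSpace ℝ (Fin n) → ℝ) (a : EuclideanSpace ℝ (Fin n)) (r : ℝ), 0 ≤ ∫ x in Metric.ball a r, |F x| ^ p :=
    fun F a r => integral_nonneg fun x => Real.rpow_nonneg (abs_nonneg _) _
  have hgle : ∀ x : EuclideanSpace ℝ (Fin n), x ≠ 0 → |g x| ≤ |f x| := by
    intro x hx
    rw [hg x hx]
    split_ifs with hc
    · exact le_rfl
    · simp [abs_nonneg]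
  have hIle : ∀ (a : EuclideanSpace ℝ (Fin n)) (r : ℝ),
      (∫ x in Metric.ball a r, |g x| ^ p) ≤ ∫ x in Metric.ball a r, |f x| ^ p :=
    fun a r => integral_mono_of_nonneg
      (Filter.Eventually.of_forall fun x => Real.rpow_nonneg (abs_nonneg _) _)
      (hIf a r)
      (ae_restrict_of_ae (hae0.mono fun x hx =>
        Real.rpow_le_rpow (abs_nonneg _) (hgle x hx) hp0.le))
  have hkf : ∀ x : EuclideanSpace ℝ (Fin n), x ≠ 0 → |k x| = |f x| := by
    intro x hx
    have hkx : k x = 2 * g x - f x := by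
      rw [hk, hh]; simp only [Pi.sub_apply]; ring
    rw [hkx, hg x hx]
    split_ifs with hc
    · rw [show 2 * f x - f x = f x by ring]
    · rw [show 2 * (0:ℝ) - f x = -(f x) by ring, abs_neg]
  have hIkf : ∀ (a : EuclideanSpace ℝ (Fin n)) (r : ℝ),
      (∫ x in Metric.ball a r, |k x| ^ p) = ∫ x in Metric.ball a r, |f x| ^ p :=
    fun a r => integral_congr_ae (ae_restrict_of_ae (hae0.mono fun x hx => by dsimp only; rw [hkf x hx]))
  have hsetkf : smallMorreySet n p q k = smallMorreySet n p q f := by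
    ext v
    constructor <;> rintro ⟨a, r, h1, h2, rfl⟩ <;>
      exact ⟨a, r, h1, h2, by rw [hIkf a r]⟩
  -- scaling identity
  have hgf : ∀ y : EuclideanSpace ℝ (Fin n), y ≠ 0 → g (ε • y) = ε ^ (-((n:ℝ)/q)) * f y := by
    intro y hy
    have hny : 0 < ‖y‖ := norm_pos_iff.mpr hy
    have hεy : (ε • y : EuclideanSpace ℝ (Fin n)) ≠ 0 := smul_ne_zero hε.ne' hy
    have hsm : ‖(ε • y : EuclideanSpace ℝ (Fin n))‖ = ε * ‖y‖ := by
      rw [norm_smul, Real.norm_eq_abs, abs_of_pos hε]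
    rw [hg _ hεy, hf _ hεy, hf y hy, hsm]
    by_cases h1 : ‖y‖ < 1
    · have c1 : 0 < ε * ‖y‖ := by positivity
      have c2 : ε * ‖y‖ < ε := by nlinarith
      have c3 : ε * ‖y‖ < 1 := by nlinarith
      rw [if_pos ⟨c1, c2⟩, if_pos ⟨c1, c3⟩, if_pos ⟨hny, h1⟩,
        Real.mul_rpow hε.le (norm_nonneg y)]
    · have hc1 : ¬(0 < ε * ‖y‖ ∧ ε * ‖y‖ < ε) := by
        rintro ⟨-, hcc⟩
        exact h1 ((mul_lt_iff_lt_one_right hε).mp hcc)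
      rw [if_neg hc1, if_neg (fun hc => h1 hc.2), mul_zero]
  have hscale : ∀ (a : EuclideanSpace ℝ (Fin n)) (r : ℝ), 0 < r →
      (volume (Metric.ball (ε • a) (ε * r))).toReal ^ (1 / q - 1 / p) *
        (∫ x in Metric.ball (ε • a) (ε * r), |g x| ^ p) ^ (1 / p)
      = (volume (Metric.ball a r)).toReal ^ (1 / q - 1 / p) *
        (∫ x in Metric.ball a r, |f x| ^ p) ^ (1 / p) := by
    intro a r hr
    have hv : (volume (Metric.ball (ε • a) (ε * r))).toReal
        = ε ^ (n:ℝ) * (volume (Metric.ball a r)).toReal := by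
      rw [Measure.addHaar_ball_of_pos volume (ε • a) (by positivity : 0 < ε * r),
        Measure.addHaar_ball_of_pos volume a hr, finrank_euclideanSpace_fin,
        ENNReal.toReal_mul, ENNReal.toReal_mul,
        ENNReal.toReal_ofReal (by positivity), ENNReal.toReal_ofReal (by positivity),
        mul_pow, ← Real.rpow_natCast ε n]
      ring
    have h1 : Metric.ball (ε • a) (ε * r) = ε • Metric.ball a r := by
      rw [smul_ball hε.ne' a r, Real.norm_eq_abs, abs_of_pos hε]
    have h2 := Measure.setIntegral_comp_smul_of_pos volume
      (fun x : EuclideanSpace ℝ (Fin n) => |g x| ^ p) (Metric.ball a r) hε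
    rw [finrank_euclideanSpace_fin] at h2
    have h3 : (∫ x in ε • Metric.ball a r, |g x| ^ p)
        = ε ^ n * ∫ x in Metric.ball a r, |g (ε • x)| ^ p := by
      rw [h2, smul_eq_mul, ← mul_assoc, mul_inv_cancel₀ (by positivity), one_mul]
    have h4 : (∫ x in Metric.ball a r, |g (ε • x)| ^ p)
        = ε ^ (-((n:ℝ)/q) * p) * ∫ x in Metric.ball a r, |f x| ^ p := by
      rw [← integral_const_mul]
      refine integral_congr_ae (ae_restrict_of_ae (hae0.mono fun y hy => ?_))
      dsimp only
      rw [hgf y hy, abs_mul, abs_of_pos (Real.rpow_pos_of_pos hε _),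
        Real.mul_rpow (Real.rpow_nonneg hε.le _) (abs_nonneg _), ← Real.rpow_mul hε.le]
    have hi : (∫ x in Metric.ball (ε • a) (ε * r), |g x| ^ p)
        = ε ^ ((n:ℝ) - ((n:ℝ)/q) * p) * ∫ x in Metric.ball a r, |f x| ^ p := by
      rw [h1, h3, h4, ← Real.rpow_natCast ε n, ← mul_assoc, ← Real.rpow_add hε,
        show ((n:ℝ) + -((n:ℝ)/q) * p) = ((n:ℝ) - ((n:ℝ)/q) * p) by ring]
    rw [hv, hi, Real.mul_rpow (by positivity) ENNReal.toReal_nonneg,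
      Real.mul_rpow (by positivity) (hInn f a r),
      ← Real.rpow_mul hε.le, ← Real.rpow_mul hε.le]
    have key : ε ^ ((n:ℝ) * (1 / q - 1 / p)) * ε ^ (((n:ℝ) - ((n:ℝ)/q) * p) * (1/p)) = 1 := by
      rw [← Real.rpow_add hε,
        show ((n:ℝ) * (1 / q - 1 / p) + ((n:ℝ) - ((n:ℝ)/q) * p) * (1/p)) = 0 by
          field_simp; ring,
        Real.rpow_zero]
    linear_combination ((volume (Metric.ball a r)).toReal ^ (1 / q - 1 / p) *
      (∫ x in Metric.ball a r, |f x| ^ p) ^ (1 / p)) * key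
  have hsub : smallMorreySet n p q f ⊆ smallMorreySet n p q g := by
    rintro v ⟨a, r, h1, h2, rfl⟩
    exact ⟨ε • a, ε * r, by positivity, by nlinarith, (hscale a r h1).symm⟩
  have hdom : ∀ (a : EuclideanSpace ℝ (Fin n)) (r : ℝ),
      (volume (Metric.ball a r)).toReal ^ (1 / q - 1 / p) *
        (∫ x in Metric.ball a r, |g x| ^ p) ^ (1 / p)
      ≤ (volume (Metric.ball a r)).toReal ^ (1 / q - 1 / p) *
        (∫ x in Metric.ball a r, |f x| ^ p) ^ (1 / p) :=
    fun a r => mul_le_mul_of_nonneg_left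
      (Real.rpow_le_rpow (hInn g a r) (hIle a r) (by positivity))
      (Real.rpow_nonneg ENNReal.toReal_nonneg _)
  have hne : ∀ F : EuclideanSpace ℝ (Fin n) → ℝ, (smallMorreySet n p q F).Nonempty :=
    fun F => ⟨_, ⟨0, 1/2, by norm_num, by norm_num, rfl⟩⟩
  have main1 : smallMorreyNorm n p q f = smallMorreyNorm n p q g := by
    unfold smallMorreyNorm
    by_cases hb : BddAbove (smallMorreySet n p q g)
    · have hbf : BddAbove (smallMorreySet n p q f) := BddAbove.mono hsub hb
      apply le_antisymm
      · exact csSup_le_csSup hb (hne f) hsub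
      · refine csSup_le (hne g) ?_
        rintro v ⟨a, r, h1, h2, rfl⟩
        exact le_trans (hdom a r) (le_csSup hbf ⟨a, r, h1, h2, rfl⟩)
    · have hbf : ¬ BddAbove (smallMorreySet n p q f) := by
        intro hbf
        obtain ⟨M, hM⟩ := hbf
        refine hb ⟨M, ?_⟩
        rintro v ⟨a, r, h1, h2, rfl⟩
        exact le_trans (hdom a r) (hM ⟨a, r, h1, h2, rfl⟩)
      rw [Real.sSup_of_not_bddAbove hb, Real.sSup_of_not_bddAbove hbf]
  refine ⟨main1, ?_⟩
  rw [← main1]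
  unfold smallMorreyNorm
  rw [hsetkf]
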